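/- Multinomial formula for Wick monomials: if X = (X₁,…,X_n) is a vector of random variables with finite moments of order < N, c ∈ ℝ^n, and Y = c₁X₁ + ⋯ + c_nX_n, then for every 0 ≤ k < N, :Y^k: = Σ_{β ∈ ℕ^n, |β| = k} (k!/β!) c^β :X^β: almost surely. -/

import Mathlib

open MeasureTheory MvPolynomial

noncomputable section

def mdeg {ι : Type*} [Fintype ι] (β : ι →₀ ℕ) : ℕ := ∑ i, β i

def IsSegalFamily {ι : Type*} [Fintype ι] [DecidableEq ι]
    (μ : Measure (ι → ℝ)) (N : ℕ∞)
    (p : (ι →₀ ℕ) → MvPolynomial ι ℝ) : Prop :=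
  p 0 = 1 ∧
  (∀ β : ι →₀ ℕ, (mdeg β : ℕ∞) < N → ∀ j : ι,
      pderiv j (p β) = (β j : ℝ) • p (β - Finsupp.single j 1)) ∧
  (∀ β : ι →₀ ℕ, 0 < mdeg β → (mdeg β : ℕ∞) < N → ∫ x, eval x (p β) ∂μ = 0)

def HasMoments {ι : Type*} [Fintype ι] (μ : Measure (ι → ℝ)) (N : ℕ∞) : Prop :=
  ∀ k : ℕ, (k : ℕ∞) < N → Integrable (fun x : ι → ℝ => (∑ i, |x i|) ^ k) μ

def IsAppellFamily (μ : Measure ℝ) (N : ℕ∞) (p : ℕ → Polynomial ℝ) : Prop :=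
  p 0 = 1 ∧
  (∀ k : ℕ, ((k + 1 : ℕ) : ℕ∞) < N → Polynomial.derivative (p (k + 1)) = ((k : ℝ) + 1) • p k) ∧
  (∀ k : ℕ, 0 < k → (k : ℕ∞) < N → ∫ x, (p k).eval x ∂μ = 0)

/-!
Write `L = ∑ cᵢ Xᵢ` and let `wickMap p` be the linear map `X^β ↦ p β`, so that
`:x^β: = wickMap p (x^β)`. By the multinomial theorem the right-hand side is `wickMap p (L^k)`
evaluated at `X`, so it suffices to prove the polynomial identity `q_k(L) = wickMap p (L^k)`, by
induction on `k`. The Segal relation `∂ⱼ p_β = βⱼ p_{β-eⱼ}` says that `wickMap p` commutes with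
`∂ⱼ`, and the Appell relation `q_{k+1}' = (k+1) q_k` gives the same for `q ∘ L`; hence `∂ⱼ` sends
both sides at `k + 1` to `(k+1) cⱼ` times the two sides at `k`, so these differ by a constant. That
constant vanishes since both sides are centred under the law of `X`; integrability comes from the
moment hypothesis, as `p_β` has total degree at most `|β|`.
-/

theorem mdeg_eq_degree {σ : Type*} [Fintype σ] (β : σ →₀ ℕ) : mdeg β = β.degree :=
  (Finsupp.degree_eq_sum β).symm

theorem mdeg_le_totalDegree {σ R : Type*} [Fintype σ] [CommSemiring R] {f : MvPolynomial σ R}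
    {β : σ →₀ ℕ} (hβ : β ∈ f.support) : mdeg β ≤ f.totalDegree := by
  rw [mdeg_eq_degree]
  exact le_totalDegree hβ

namespace MvPolynomial

section pderiv

variable {σ R : Type*}

theorem totalDegree_le_succ_of_pderiv [CommSemiring R] [NoZeroDivisors R] [CharZero R]
    {f : MvPolynomial σ R} {d : ℕ} (h : ∀ i, (pderiv i f).totalDegree ≤ d) :
    f.totalDegree ≤ d + 1 := by
  refine Finset.sup_le fun m hm => ?_
  change m.degree ≤ d + 1
  obtain rfl | ⟨i, hi⟩ := eq_or_ne m 0 |>.imp id Finsupp.ne_iff.mp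
  · simp
  have hm' : m = (m - Finsupp.single i 1) + Finsupp.single i 1 :=
    (Finsupp.sub_add_single_one_cancel hi).symm
  have hcoeff : coeff (m - Finsupp.single i 1) (pderiv i f) ≠ 0 := by
    rw [coeff_pderiv, ← hm']
    exact mul_ne_zero (mem_support_iff.mp hm) (Nat.cast_add_one_ne_zero _)
  have hle : (m - Finsupp.single i 1).degree ≤ d :=
    (le_totalDegree (mem_support_iff.mpr hcoeff)).trans (h i)
  rw [hm', map_add, Finsupp.degree_single]
  omega

theorem eq_add_C_of_pderiv_eq [CommRing R] [IsAddTorsionFree R] {f g : MvPolynomial σ R}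
    (h : ∀ i, pderiv i f = pderiv i g) :
    f = g + C (constantCoeff f - constantCoeff g) := by
  apply coe_injective
  refine MvPowerSeries.pderiv.ext (fun i => ?_) ?_
  · simp [coe_add, MvPowerSeries.pderiv_coe, h i]
  · simp only [← MvPowerSeries.coeff_zero_eq_constantCoeff_apply, coe_add, coeff_coe, map_add,
      ← constantCoeff_eq, constantCoeff_C]
    abel

end pderiv

section wickMap

variable {σ R : Type*} [CommSemiring R]

def wickMap (p : (σ →₀ ℕ) → MvPolynomial σ R) : MvPolynomial σ R →ₗ[R] MvPolynomial σ R :=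
  (basisMonomials σ R).constr R p

variable (p : (σ →₀ ℕ) → MvPolynomial σ R)

theorem wickMap_monomial (β : σ →₀ ℕ) (a : R) : wickMap p (monomial β a) = a • p β := by
  rw [show monomial β a = a • basisMonomials σ R β by simp [smul_monomial], map_smul, wickMap,
    Module.Basis.constr_basis]

theorem wickMap_one : wickMap p 1 = p 0 := by
  rw [← C_1, C_apply, wickMap_monomial, one_smul]

theorem wickMap_eq_sum (f : MvPolynomial σ R) :
    wickMap p f = ∑ β ∈ f.support, coeff β f • p β := by
  conv_lhs => rw [f.as_sum]
  simp only [map_sum, wickMap_monomial]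

theorem eval_wickMap (x : σ → R) (f : MvPolynomial σ R) :
    eval x (wickMap p f) = ∑ᶠ β, coeff β f * eval x (p β) := by
  rw [finsum_eq_finsetSum_of_support_subset (s := f.support), wickMap_eq_sum, map_sum]
  · simp only [smul_eval]
  · intro β hβ
    simpa using left_ne_zero_of_mul hβ

theorem pderiv_wickMap (j : σ) {f : MvPolynomial σ R}
    (hp : ∀ β ∈ f.support, pderiv j (p β) = (β j : R) • p (β - Finsupp.single j 1)) :
    pderiv j (wickMap p f) = wickMap p (pderiv j f) := by
  conv_lhs => rw [f.as_sum]
  conv_rhs => rw [f.as_sum]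
  simp only [map_sum]
  refine Finset.sum_congr rfl fun β hβ => ?_
  rw [wickMap_monomial, pderiv_monomial, wickMap_monomial, Derivation.map_smul, hp β hβ, smul_smul]

end wickMap

section linearForm

variable {σ R : Type*} [Fintype σ] [CommSemiring R] (c : σ → R)

theorem pderiv_sum_smul_X (j : σ) : pderiv j (∑ i, c i • X i : MvPolynomial σ R) = C (c j) := by
  classical
  simp [Pi.single_apply, smul_eq_C_mul]

theorem pderiv_sum_smul_X_pow (j : σ) (k : ℕ) :
    pderiv j ((∑ i, c i • X i : MvPolynomial σ R) ^ (k + 1)) =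
      (((k : R) + 1) * c j) • (∑ i, c i • X i) ^ k := by
  rw [pderiv_pow, pderiv_sum_smul_X, Nat.add_sub_cancel, smul_eq_C_mul]
  simp only [map_mul, map_add, map_natCast, map_one]
  push_cast
  ring

theorem eval_aeval_sum_smul_X (x : σ → R) (q : Polynomial R) :
    eval x (Polynomial.aeval (∑ i, c i • X i : MvPolynomial σ R) q) = q.eval (∑ i, c i * x i) := by
  change aeval x _ = _
  rw [← Polynomial.aeval_algHom_apply, Polynomial.coe_aeval_eq_eval]
  simp

theorem isHomogeneous_sum_smul_X : IsHomogeneous (∑ i, c i • X i : MvPolynomial σ R) 1 :=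
  IsHomogeneous.sum _ _ _ fun i _ => by simpa [smul_eq_C_mul] using isHomogeneous_C_mul_X (c i) i

end linearForm

theorem coeff_sum_smul_X_pow {σ K : Type*} [Fintype σ] [Field K] [CharZero K] (c : σ → K)
    (β : σ →₀ ℕ) (k : ℕ) :
    coeff β ((∑ i, c i • X i : MvPolynomial σ K) ^ k) =
      if mdeg β = k then
        ((Nat.factorial k : ℕ) : K) / ((∏ i, Nat.factorial (β i) : ℕ) : K) * ∏ i, c i ^ β i
      else 0 := by
  have hsum : (β.sum fun _ m => m) = mdeg β := by rw [mdeg_eq_degree]; rfl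
  rw [coeff_linearCombination_X_pow_of_fintype, hsum]
  split_ifs with hβ
  · have hmul : ((Nat.multinomial Finset.univ β : ℕ) : K) * ((∏ i, (β i).factorial : ℕ) : K) =
        (k.factorial : ℕ) := by
      rw [← hβ, mul_comm]
      exact_mod_cast Nat.multinomial_spec (s := Finset.univ) (f := β)
    rw [Finsupp.multinomial_eq_of_support_subset (Finset.subset_univ _),
      eq_div_of_mul_eq (by simp [Finset.prod_ne_zero_iff, Nat.factorial_ne_zero]) hmul,
      Finsupp.prod_fintype _ _ fun _ => pow_zero _]
  · rfl

end MvPolynomial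

section moments

variable {σ : Type*} [Fintype σ] {μ : Measure (σ → ℝ)} {N : ℕ∞}

theorem HasMoments.integrable_prod_pow (hμ : HasMoments μ N) {m : σ →₀ ℕ}
    (hm : (m.degree : ℕ∞) < N) : Integrable (fun x => ∏ i, x i ^ m i) μ := by
  refine (hμ _ hm).mono' (Continuous.aestronglyMeasurable (by fun_prop))
    (Filter.Eventually.of_forall fun x => ?_)
  rw [Real.norm_eq_abs, Finset.abs_prod, Finsupp.degree_eq_sum, ← Finset.prod_pow_eq_pow_sum]
  gcongr with i
  rw [abs_pow]
  gcongr
  exact Finset.single_le_sum (f := fun i => |x i|) (fun i _ => abs_nonneg _) (Finset.mem_univ i)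

theorem HasMoments.integrable_eval (hμ : HasMoments μ N) {f : MvPolynomial σ ℝ}
    (hf : (f.totalDegree : ℕ∞) < N) : Integrable (fun x => eval x f) μ := by
  simp_rw [eval_eq']
  refine integrable_finsetSum _ fun m hm => (hμ.integrable_prod_pow ?_).const_mul _
  exact lt_of_le_of_lt (by exact_mod_cast le_totalDegree hm) hf

end moments

theorem MvPolynomial.eq_of_pderiv_eq_of_integral_eq {σ : Type*} {μ : Measure (σ → ℝ)}
    [IsProbabilityMeasure μ] {f g : MvPolynomial σ ℝ} (hD : ∀ i, pderiv i f = pderiv i g)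
    (hg : Integrable (fun x => eval x g) μ) (hfg : ∫ x, eval x f ∂μ = ∫ x, eval x g ∂μ) :
    f = g := by
  have hf := eq_add_C_of_pderiv_eq hD
  rw [hf] at hfg
  simp only [map_add, eval_C] at hfg
  rw [integral_add hg (integrable_const _), integral_const, probReal_univ, one_smul] at hfg
  rw [hf, add_eq_left.mp hfg, map_zero, add_zero]

theorem MvPolynomial.integral_eval_aeval_sum_smul_X {σ : Type*} [Fintype σ]
    (μ : Measure (σ → ℝ)) (c : σ → ℝ) (q : Polynomial ℝ) :
    ∫ x, eval x (Polynomial.aeval (∑ i, c i • X i) q) ∂μ =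
      ∫ y, q.eval y ∂(μ.map fun x => ∑ i, c i * x i) := by
  rw [integral_map (Continuous.aemeasurable (by fun_prop)) q.continuous.aestronglyMeasurable]
  simp_rw [eval_aeval_sum_smul_X]

namespace IsSegalFamily

variable {σ : Type*} [Fintype σ] [DecidableEq σ] {μ : Measure (σ → ℝ)} {N : ℕ∞}
  {p : (σ →₀ ℕ) → MvPolynomial σ ℝ}

theorem totalDegree_le (hp : IsSegalFamily μ N p) {β : σ →₀ ℕ} (hβ : (mdeg β : ℕ∞) < N) :
    (p β).totalDegree ≤ mdeg β := by
  induction h : mdeg β generalizing β with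
  | zero =>
    rw [mdeg_eq_degree, Finsupp.degree_eq_zero_iff] at h
    simp [h, hp.1]
  | succ d ih =>
    refine totalDegree_le_succ_of_pderiv fun j => ?_
    rw [hp.2.1 β hβ j]
    obtain hj | hj := eq_or_ne (β j) 0
    · simp [hj]
    have hdeg : mdeg (β - Finsupp.single j 1) = d := by
      rw [mdeg_eq_degree] at h ⊢
      rw [← Finsupp.sub_add_single_one_cancel hj, map_add, Finsupp.degree_single] at h
      omega
    refine (totalDegree_smul_le _ _).trans (ih ?_ hdeg)
    rw [hdeg]
    exact lt_of_le_of_lt (by exact_mod_cast d.le_succ) (h ▸ hβ)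

theorem integrable_eval (hp : IsSegalFamily μ N p) (hμ : HasMoments μ N) {β : σ →₀ ℕ}
    (hβ : (mdeg β : ℕ∞) < N) : Integrable (fun x => eval x (p β)) μ :=
  hμ.integrable_eval (lt_of_le_of_lt (by exact_mod_cast hp.totalDegree_le hβ) hβ)

theorem integrable_eval_wickMap (hp : IsSegalFamily μ N p) (hμ : HasMoments μ N)
    {f : MvPolynomial σ ℝ} (hf : (f.totalDegree : ℕ∞) < N) :
    Integrable (fun x => eval x (wickMap p f)) μ := by
  simp_rw [wickMap_eq_sum, map_sum, smul_eval]
  refine integrable_finsetSum _ fun β hβ => (hp.integrable_eval hμ ?_).const_mul _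
  exact lt_of_le_of_lt (by exact_mod_cast mdeg_le_totalDegree hβ) hf

theorem pderiv_wickMap (hp : IsSegalFamily μ N p) {f : MvPolynomial σ ℝ}
    (hf : (f.totalDegree : ℕ∞) < N) (j : σ) :
    pderiv j (wickMap p f) = wickMap p (pderiv j f) :=
  MvPolynomial.pderiv_wickMap p j fun β hβ =>
    hp.2.1 β (lt_of_le_of_lt (by exact_mod_cast mdeg_le_totalDegree hβ) hf) j

theorem integral_eval_wickMap_eq_zero (hp : IsSegalFamily μ N p) (hμ : HasMoments μ N)
    {f : MvPolynomial σ ℝ} {d : ℕ} (hf : f.IsHomogeneous d) (hd : 0 < d) (hdN : (d : ℕ∞) < N) :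
    ∫ x, eval x (wickMap p f) ∂μ = 0 := by
  have hdeg : ∀ β ∈ f.support, mdeg β = d := fun β hβ => by
    rw [mdeg_eq_degree, Finsupp.degree_apply, hf.degree_eq_sum_deg_support hβ]
  simp_rw [wickMap_eq_sum, map_sum, smul_eval]
  rw [integral_finsetSum _ fun β hβ => (hp.integrable_eval hμ (hdeg β hβ ▸ hdN)).const_mul _]
  refine Finset.sum_eq_zero fun β hβ => ?_
  rw [integral_const_mul, hp.2.2 β (hdeg β hβ ▸ hd) (hdeg β hβ ▸ hdN), mul_zero]

end IsSegalFamily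

theorem IsAppellFamily.aeval_sum_smul_X_eq_wickMap_pow {σ : Type*} [Fintype σ] [DecidableEq σ]
    {μ : Measure (σ → ℝ)} [IsProbabilityMeasure μ] {N : ℕ∞} {p : (σ →₀ ℕ) → MvPolynomial σ ℝ}
    {q : ℕ → Polynomial ℝ} {c : σ → ℝ} (hq : IsAppellFamily (μ.map fun x => ∑ i, c i * x i) N q)
    (hp : IsSegalFamily μ N p) (hμ : HasMoments μ N) {k : ℕ} (hk : (k : ℕ∞) < N) :
    Polynomial.aeval (∑ i, c i • X i) (q k) = wickMap p ((∑ i, c i • X i) ^ k) := by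
  set L : MvPolynomial σ ℝ := ∑ i, c i • X i
  have hL : ∀ m, (L ^ m).IsHomogeneous m := fun m => by
    simpa using (isHomogeneous_sum_smul_X c).pow m
  induction k with
  | zero => rw [hq.1, pow_zero, map_one, wickMap_one, hp.1]
  | succ k ih =>
    have hkN : (k : ℕ∞) < N := lt_of_le_of_lt (by exact_mod_cast k.le_succ) hk
    have hdeg : ((L ^ (k + 1)).totalDegree : ℕ∞) < N :=
      lt_of_le_of_lt (by exact_mod_cast (hL _).totalDegree_le) hk
    refine eq_of_pderiv_eq_of_integral_eq (μ := μ) (fun j => ?_)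
      (hp.integrable_eval_wickMap hμ hdeg) ?_
    · rw [Derivation.map_aeval, hq.2.1 k hk, map_smul, ih hkN, hp.pderiv_wickMap hdeg,
        pderiv_sum_smul_X_pow, pderiv_sum_smul_X, map_smul, smul_eq_mul, smul_mul_assoc, mul_comm,
        ← smul_eq_C_mul, smul_smul]
    · rw [integral_eval_aeval_sum_smul_X, hq.2.2 _ k.succ_pos hk,
        hp.integral_eval_wickMap_eq_zero hμ (hL _) k.succ_pos hk]

theorem wick_multinomial {n : ℕ} {Ω : Type*} [MeasurableSpace Ω]
    (P : Measure Ω) [IsProbabilityMeasure P]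
    (X : Ω → Fin n → ℝ) (hX : Measurable X) (N : ℕ∞)
    (hmom : ∀ k : ℕ, (k : ℕ∞) < N → Integrable (fun ω => (∑ i, |X ω i|) ^ k) P)
    (c : Fin n → ℝ)
    (p : (Fin n →₀ ℕ) → MvPolynomial (Fin n) ℝ) (q : ℕ → Polynomial ℝ)
    (hp : IsSegalFamily (P.map X) N p)
    (hq : IsAppellFamily (P.map (fun ω => ∑ i, c i * X ω i)) N q)
    (k : ℕ) (hk : (k : ℕ∞) < N) :
    ∀ᵐ ω ∂P, (q k).eval (∑ i, c i * X ω i) =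
      ∑ᶠ β : Fin n →₀ ℕ,
        if mdeg β = k then
          ((Nat.factorial k : ℕ) : ℝ) / ((∏ i, Nat.factorial (β i) : ℕ) : ℝ) *
            (∏ i, c i ^ β i) * eval (X ω) (p β)
        else 0 := by
  have : IsProbabilityMeasure (P.map X) := Measure.isProbabilityMeasure_map hX.aemeasurable
  have hmomX : HasMoments (P.map X) N := fun m hm =>
    (integrable_map_measure (Continuous.aestronglyMeasurable (by fun_prop)) hX.aemeasurable).2
      (hmom m hm)
  have hmap : (P.map X).map (fun x => ∑ i, c i * x i) = P.map (fun ω => ∑ i, c i * X ω i) :=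
    Measure.map_map (by fun_prop) hX
  have hkey := (hmap ▸ hq).aeval_sum_smul_X_eq_wickMap_pow hp hmomX hk
  refine Filter.Eventually.of_forall fun ω => ?_
  rw [← eval_aeval_sum_smul_X, hkey, eval_wickMap]
  refine finsum_congr fun β => ?_
  rw [coeff_sum_smul_X_pow]
  split_ifs <;> simp

end
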